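/- Let Ω ⊂ ℝⁿ be a bounded convex domain. For every compactly supported smooth function φ on Ω there exist convex functions φ₁, φ₂ ∈ C(closure Ω), Lipschitz on closure(Ω), vanishing on ∂Ω, such that φ = φ₁ − φ₂ on Ω. -/

import Mathlib

open Set Metric

lemma convexOn_univ_of_hasFDerivAt' {E : Type*} [NormedAddCommGroup E] [NormedSpace ℝ E]
    {f : E → ℝ} {f' : E → E →L[ℝ] ℝ} (hd : ∀ x, HasFDerivAt f (f' x) x)
    (hm : ∀ x y, 0 ≤ (f' x - f' y) (x - y)) : ConvexOn ℝ univ f := by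
  refine ⟨convex_univ, ?_⟩
  intro x _ y _ a b ha hb hab
  set c : ℝ → E := fun t => x + t • (y - x) with hc_def
  have hc : ∀ t : ℝ, HasDerivAt (fun t => f (c t)) (f' (c t) (y - x)) t := by
    intro t
    have h1 : HasDerivAt c (y - x) t := by
      have := ((hasDerivAt_id t).smul_const (y - x)).const_add x
      simpa [hc_def] using this
    exact (hd (c t)).comp_hasDerivAt t h1
  have hdiff : Differentiable ℝ (fun t => f (c t)) := fun t => (hc t).differentiableAt
  have hderiv : ∀ t, deriv (fun t => f (c t)) t = f' (c t) (y - x) := fun t => (hc t).deriv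
  have hmono : Monotone (deriv fun t => f (c t)) := by
    intro s t hst
    rw [hderiv, hderiv]
    rcases eq_or_lt_of_le hst with rfl | h
    · exact le_rfl
    have h0 := hm (c t) (c s)
    have hcc : c t - c s = (t - s) • (y - x) := by
      simp only [hc_def]
      module
    rw [hcc, map_smul, smul_eq_mul] at h0
    have hd0 : 0 ≤ (f' (c t) - f' (c s)) (y - x) := by
      by_contra hlt
      push_neg at hlt
      nlinarith [mul_neg_of_pos_of_neg (sub_pos.2 h) hlt]
    rw [ContinuousLinearMap.sub_apply] at hd0
    linarith
  have hconv := hmono.convexOn_univ_of_deriv hdiff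
  have h2 := hconv.2 (mem_univ (0 : ℝ)) (mem_univ (1 : ℝ)) ha hb hab
  simp only [smul_eq_mul, mul_zero, mul_one, zero_add] at h2
  have e0 : c 0 = x := by simp [hc_def]
  have e1 : c 1 = y := by simp [hc_def]
  have eb : c b = a • x + b • y := by
    have haa : a = 1 - b := by linarith
    subst haa
    simp only [hc_def]
    module
  rw [e0, e1, eb] at h2
  simpa [smul_eq_mul] using h2

lemma aux_ball_mem' {E : Type*} [NormedAddCommGroup E] [NormedSpace ℝ E]
    {Ω : Set E} (hΩo : IsOpen Ω) (hΩc : Convex ℝ Ω)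
    {x y v : E} {a b : ℝ} (ha : 0 ≤ a) (hb : 0 ≤ b) (hab : a + b = 1)
    (hx : x ∈ closure Ω) (hy : y ∈ closure Ω)
    (hv : ‖v‖ < a * infDist x Ωᶜ + b * infDist y Ωᶜ) :
    a • x + b • y + v ∈ Ω := by
  set dx := infDist x Ωᶜ with hdx
  set dy := infDist y Ωᶜ with hdy
  have hdx0 : 0 ≤ dx := infDist_nonneg
  have hdy0 : 0 ≤ dy := infDist_nonneg
  set r : ℝ := a * dx + b * dy with hr
  have hr0 : 0 < r := lt_of_le_of_lt (norm_nonneg v) hv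
  set p := x + (dx / r) • v with hp_def
  set q := y + (dy / r) • v with hq_def
  have key : ∀ z : E, z ∈ closure Ω → ∀ d : ℝ, d = infDist z Ωᶜ →
      (z + (d / r) • v ∈ closure Ω) ∧ (0 < d → z + (d / r) • v ∈ Ω) := by
    intro z hz d hd
    rcases eq_or_lt_of_le (hd ▸ infDist_nonneg : (0:ℝ) ≤ d) with h0 | h0
    · constructor
      · simp [← h0, hz]
      · intro hdd; exact absurd h0 (by linarith)
    · have hmem : z + (d / r) • v ∈ ball z (infDist z Ωᶜ) := by
        rw [mem_ball, dist_self_add_left, norm_smul, ← hd]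
        have : |d / r| = d / r := abs_of_pos (div_pos h0 hr0)
        rw [Real.norm_eq_abs, this]
        calc d / r * ‖v‖ < d / r * r := mul_lt_mul_of_pos_left hv (div_pos h0 hr0)
          _ = d := div_mul_cancel₀ d hr0.ne'
      have : z + (d / r) • v ∈ Ω := ball_infDist_compl_subset hmem
      exact ⟨subset_closure this, fun _ => this⟩
  obtain ⟨hpc, hpo⟩ := key x hx dx hdx
  obtain ⟨hqc, hqo⟩ := key y hy dy hdy
  have hw : a • p + b • q = a • x + b • y + v := by
    have hs : a * (dx / r) + b * (dy / r) = 1 := by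
      field_simp
      exact hr.symm
    have : a • p + b • q = a • x + b • y + (a * (dx / r) + b * (dy / r)) • v := by
      simp only [hp_def, hq_def]
      module
    rw [this, hs, one_smul]
  rw [← hw]
  rcases lt_or_ge 0 (a * dx) with hpos | hle
  · have ha' : 0 < a := by nlinarith
    have hdx' : 0 < dx := by nlinarith
    have := hΩc.combo_interior_closure_subset_interior ha' hb hab
      (Set.add_mem_add (smul_mem_smul_set ((hΩo.interior_eq).symm ▸ hpo hdx'))
        (smul_mem_smul_set hqc))
    rwa [hΩo.interior_eq] at this
  · have hbdy : 0 < b * dy := by nlinarith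
    have hb' : 0 < b := by nlinarith
    have hdy' : 0 < dy := by nlinarith
    have := hΩc.combo_closure_interior_subset_interior ha hb' hab
      (Set.add_mem_add (smul_mem_smul_set hpc)
        (smul_mem_smul_set ((hΩo.interior_eq).symm ▸ hqo hdy')))
    rwa [hΩo.interior_eq] at this

lemma concave_infDist_compl' {E : Type*} [NormedAddCommGroup E] [NormedSpace ℝ E]
    {Ω : Set E} (hΩo : IsOpen Ω) (hΩc : Convex ℝ Ω) (hc : Ωᶜ.Nonempty) :
    ConvexOn ℝ (closure Ω) (fun x => -infDist x Ωᶜ) := by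
  refine ⟨hΩc.closure, ?_⟩
  intro x hx y hy a b ha hb hab
  simp only [smul_eq_mul, mul_neg]
  rw [← neg_add, neg_le_neg_iff]
  by_contra hcon
  push_neg at hcon
  obtain ⟨w, hw, hdist⟩ := (infDist_lt_iff hc).1 hcon
  have hnorm : ‖w - (a • x + b • y)‖ < a * infDist x Ωᶜ + b * infDist y Ωᶜ := by
    rw [← dist_eq_norm]; rwa [dist_comm]
  have := aux_ball_mem' hΩo hΩc ha hb hab hx hy hnorm
  rw [add_sub_cancel] at this
  exact hw this

/-- Every compactly supported smooth function on a bounded convex domain is the difference of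
two globally Lipschitz convex functions vanishing on the boundary. -/
theorem stmt_13 {n : ℕ} (Ω : Set (EuclideanSpace ℝ (Fin n)))
    (hΩo : IsOpen Ω) (hΩc : Convex ℝ Ω) (hΩb : Bornology.IsBounded Ω) (hΩne : Ω.Nonempty)
    (φ : EuclideanSpace ℝ (Fin n) → ℝ)
    (hφ : ContDiff ℝ (⊤ : ℕ∞) φ) (hφc : HasCompactSupport φ) (hφs : tsupport φ ⊆ Ω) :
    ∃ φ₁ φ₂ : EuclideanSpace ℝ (Fin n) → ℝ,
      ConvexOn ℝ (closure Ω) φ₁ ∧ ConvexOn ℝ (closure Ω) φ₂ ∧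
      ContinuousOn φ₁ (closure Ω) ∧ ContinuousOn φ₂ (closure Ω) ∧
      (∃ K : NNReal, LipschitzOnWith K φ₁ (closure Ω)) ∧
      (∃ K : NNReal, LipschitzOnWith K φ₂ (closure Ω)) ∧
      (∀ x ∈ frontier Ω, φ₁ x = 0) ∧ (∀ x ∈ frontier Ω, φ₂ x = 0) ∧
      (∀ x ∈ Ω, φ x = φ₁ x - φ₂ x) := by
  classical
  by_cases hcompl : Ωᶜ.Nonempty
  swap
  · -- trivial case: Ω = univ, so the bounded space is a single point
    rw [not_nonempty_iff_eq_empty, compl_empty_iff] at hcompl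
    have hzero : ∀ z : EuclideanSpace ℝ (Fin n), z = 0 := by
      obtain ⟨R, hR⟩ := hΩb.subset_closedBall 0
      intro z
      by_contra hz
      have hzn : 0 < ‖z‖ := norm_pos_iff.2 hz
      have h1 : ((|R| + 1) / ‖z‖) • z ∈ Ω := hcompl ▸ mem_univ _
      have h2 := hR h1
      rw [mem_closedBall_zero_iff, norm_smul, Real.norm_eq_abs,
        abs_of_pos (div_pos (by positivity) hzn), div_mul_cancel₀ _ hzn.ne'] at h2
      have : R ≤ |R| := le_abs_self R
      linarith
    have hfr : frontier Ω = ∅ := by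
      rw [frontier_eq_closure_inter_closure, hcompl]
      simp
    have hcv : ∀ f : EuclideanSpace ℝ (Fin n) → ℝ, ConvexOn ℝ (closure Ω) f := by
      intro f
      refine ⟨hΩc.closure, ?_⟩
      intro x _ y _ a b ha hb hab
      rw [hzero x, hzero y]
      simp only [smul_zero, add_zero, smul_eq_mul]
      have he : a * f 0 + b * f 0 = f 0 := by rw [← add_mul, hab, one_mul]
      linarith
    have hlip : ∀ f : EuclideanSpace ℝ (Fin n) → ℝ, LipschitzOnWith 1 f (closure Ω) := by
      intro f
      apply LipschitzOnWith.of_dist_le_mul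
      intro x _ y _
      rw [hzero x, hzero y]
      simp
    refine ⟨φ, 0, hcv φ, hcv 0, (hlip φ).continuousOn, (hlip 0).continuousOn,
      ⟨1, hlip φ⟩, ⟨1, hlip 0⟩, ?_, ?_, ?_⟩
    · intro x hx; rw [hfr] at hx; exact absurd hx (notMem_empty x)
    · intro x hx; rw [hfr] at hx; exact absurd hx (notMem_empty x)
    · intro x _; simp
  -- main case
  obtain ⟨Kφ, hKφ⟩ := ContDiff.lipschitzWith_of_hasCompactSupport hφc hφ (by simp)
  have hf'c : ContDiff ℝ (⊤ : ℕ∞) (fderiv ℝ φ) := hφ.fderiv_right (by simp)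
  obtain ⟨K, hK⟩ := ContDiff.lipschitzWith_of_hasCompactSupport (hφc.fderiv ℝ) hf'c (by simp)
  set C₀ : ℝ := (K : ℝ) with hC₀
  have hC₀0 : 0 ≤ C₀ := K.2
  set g : EuclideanSpace ℝ (Fin n) → ℝ := fun x => φ x + C₀ * ‖x‖ ^ 2 with hg_def
  set q : EuclideanSpace ℝ (Fin n) → ℝ := fun x => C₀ * ‖x‖ ^ 2 with hq_def
  -- derivatives
  have hqd : ∀ x, HasFDerivAt q (C₀ • (2 • innerSL ℝ x)) x := fun x =>
    ((hasStrictFDerivAt_norm_sq x).hasFDerivAt).const_mul C₀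
  have hgd : ∀ x, HasFDerivAt g (fderiv ℝ φ x + C₀ • (2 • innerSL ℝ x)) x := fun x =>
    ((hφ.differentiable (by simp) x).hasFDerivAt).add (hqd x)
  have hinner : ∀ x y : EuclideanSpace ℝ (Fin n),
      ((C₀ • (2 • innerSL ℝ x) : EuclideanSpace ℝ (Fin n) →L[ℝ] ℝ) -
        C₀ • (2 • innerSL ℝ y)) (x - y) = 2 * C₀ * ‖x - y‖ ^ 2 := by
    intro x y
    simp only [ContinuousLinearMap.sub_apply, ContinuousLinearMap.smul_apply, innerSL_apply_apply,
      smul_eq_mul, nsmul_eq_mul, Nat.cast_ofNat]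
    rw [show C₀ * (2 * (inner ℝ x (x - y) : ℝ)) - C₀ * (2 * (inner ℝ y (x - y) : ℝ))
        = 2 * C₀ * ((inner ℝ x (x - y) : ℝ) - (inner ℝ y (x - y) : ℝ)) from by ring,
      ← inner_sub_left, real_inner_self_eq_norm_sq]
  have hqconv : ConvexOn ℝ univ q := by
    apply convexOn_univ_of_hasFDerivAt' hqd
    intro x y
    rw [hinner]
    positivity
  have hgconv : ConvexOn ℝ univ g := by
    apply convexOn_univ_of_hasFDerivAt' hgd
    intro x y
    have h1 : ‖fderiv ℝ φ x - fderiv ℝ φ y‖ ≤ K * ‖x - y‖ := by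
      have := hK.dist_le_mul x y
      rwa [dist_eq_norm, dist_eq_norm] at this
    have h2 : -(C₀ * ‖x - y‖ * ‖x - y‖) ≤ (fderiv ℝ φ x - fderiv ℝ φ y) (x - y) := by
      have hb := (fderiv ℝ φ x - fderiv ℝ φ y).le_opNorm (x - y)
      have habs : |(fderiv ℝ φ x - fderiv ℝ φ y) (x - y)| ≤ C₀ * ‖x - y‖ * ‖x - y‖ := by
        rw [← Real.norm_eq_abs]
        refine hb.trans ?_
        have := norm_nonneg (x - y)
        nlinarith
      linarith [neg_abs_le ((fderiv ℝ φ x - fderiv ℝ φ y) (x - y))]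
    have hexp : ((fderiv ℝ φ x + C₀ • (2 • innerSL ℝ x)) -
        (fderiv ℝ φ y + C₀ • (2 • innerSL ℝ y))) (x - y)
        = (fderiv ℝ φ x - fderiv ℝ φ y) (x - y) + 2 * C₀ * ‖x - y‖ ^ 2 := by
      rw [← hinner x y]
      simp only [ContinuousLinearMap.sub_apply, ContinuousLinearMap.add_apply]
      ring
    rw [hexp]
    have := norm_nonneg (x - y)
    nlinarith
  -- bound on closure
  have hcomp : IsCompact (closure Ω) := hΩb.isCompact_closure
  have hconts : ContinuousOn (fun x : EuclideanSpace ℝ (Fin n) => |φ x| + C₀ * ‖x‖ ^ 2)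
      (closure Ω) :=
    (hφ.continuous.abs.add (continuous_const.mul (continuous_norm.pow 2))).continuousOn
  obtain ⟨z₀, hz₀, hz₀max⟩ := hcomp.exists_isMaxOn hΩne.closure hconts
  set C₁' : ℝ := |φ z₀| + C₀ * ‖z₀‖ ^ 2 with hC₁'
  have hbound : ∀ x ∈ closure Ω, |φ x| + C₀ * ‖x‖ ^ 2 ≤ C₁' := fun x hx => hz₀max hx
  have hC₁'0 : 0 ≤ C₁' := by positivity
  set C₁ : ℝ := C₁' + 1 with hC₁_def
  have hC₁pos : 0 < C₁ := by linarith
  -- δ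
  obtain ⟨δ, hδpos, hδ⟩ : ∃ δ : ℝ, 0 < δ ∧ ∀ x ∈ tsupport φ, δ ≤ infDist x Ωᶜ := by
    rcases (tsupport φ).eq_empty_or_nonempty with he | hne
    · exact ⟨1, one_pos, fun x hx => absurd (he ▸ hx) (notMem_empty x)⟩
    · obtain ⟨x₀, hx₀s, hmin⟩ := hφc.exists_isMinOn hne
        (continuous_infDist_pt Ωᶜ).continuousOn
      refine ⟨infDist x₀ Ωᶜ, ?_, fun x hx => hmin hx⟩
      exact (hΩo.isClosed_compl.notMem_iff_infDist_pos hcompl).1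
        (fun h => h (hφs hx₀s))
  set C₂ : ℝ := 2 * C₁ / δ with hC₂_def
  have hC₂pos : 0 < C₂ := by positivity
  set v : EuclideanSpace ℝ (Fin n) → ℝ := fun x => -infDist x Ωᶜ with hv_def
  have hvconv : ConvexOn ℝ (closure Ω) v := concave_infDist_compl' hΩo hΩc hcompl
  set φ₁ : EuclideanSpace ℝ (Fin n) → ℝ := fun x => max (g x - C₁) (C₂ * v x) with hφ₁_def
  set φ₂ : EuclideanSpace ℝ (Fin n) → ℝ := fun x => max (q x - C₁) (C₂ * v x) with hφ₂_def
  -- convexity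
  have hCv : ConvexOn ℝ (closure Ω) (fun x => C₂ * v x) := by
    simpa [smul_eq_mul] using hvconv.smul hC₂pos.le
  have hgc : ConvexOn ℝ (closure Ω) (fun x => g x - C₁) := by
    have := (hgconv.subset (subset_univ _) hΩc.closure).add (convexOn_const (-C₁) hΩc.closure)
    exact this.congr (fun x _ => by simp [sub_eq_add_neg])
  have hqc : ConvexOn ℝ (closure Ω) (fun x => q x - C₁) := by
    have := (hqconv.subset (subset_univ _) hΩc.closure).add (convexOn_const (-C₁) hΩc.closure)
    exact this.congr (fun x _ => by simp [sub_eq_add_neg])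
  have hφ₁conv : ConvexOn ℝ (closure Ω) φ₁ := by
    have h := hgc.sup hCv
    have hfe : φ₁ = (fun x => g x - C₁) ⊔ (fun x => C₂ * v x) := by
      funext x
      rw [Pi.sup_apply]
    rw [hfe]
    exact h
  have hφ₂conv : ConvexOn ℝ (closure Ω) φ₂ := by
    have h := hqc.sup hCv
    have hfe : φ₂ = (fun x => q x - C₁) ⊔ (fun x => C₂ * v x) := by
      funext x
      rw [Pi.sup_apply]
    rw [hfe]
    exact h
  -- Lipschitz
  obtain ⟨R, hR⟩ := hΩb.closure.subset_closedBall 0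
  have hRn : ∀ x ∈ closure Ω, ‖x‖ ≤ R := fun x hx => mem_closedBall_zero_iff.1 (hR hx)
  obtain ⟨x0, hx0⟩ := hΩne
  have hR0 : 0 ≤ R := (norm_nonneg x0).trans (hRn x0 (subset_closure hx0))
  set L : ℝ := (Kφ : ℝ) + C₀ * (2 * R) + C₂ with hL_def
  have hL0 : 0 ≤ L := by positivity
  have hLφ : ∀ x y : EuclideanSpace ℝ (Fin n), |φ x - φ y| ≤ (Kφ : ℝ) * dist x y := by
    intro x y
    have := hKφ.dist_le_mul x y
    rwa [Real.dist_eq] at this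
  have hLq : ∀ x ∈ closure Ω, ∀ y ∈ closure Ω, |q x - q y| ≤ C₀ * (2 * R) * dist x y := by
    intro x hx y hy
    have h1 : q x - q y = C₀ * ((‖x‖ - ‖y‖) * (‖x‖ + ‖y‖)) := by
      simp only [hq_def]; ring
    rw [h1, abs_mul, abs_of_nonneg hC₀0, abs_mul]
    have h2 : |‖x‖ - ‖y‖| ≤ dist x y := by
      rw [dist_eq_norm]; exact abs_norm_sub_norm_le x y
    have h3 : |‖x‖ + ‖y‖| ≤ 2 * R := by
      rw [abs_of_nonneg (by positivity)]
      linarith [hRn x hx, hRn y hy]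
    have := dist_nonneg (x := x) (y := y)
    calc C₀ * (|‖x‖ - ‖y‖| * |‖x‖ + ‖y‖|) ≤ C₀ * (dist x y * (2 * R)) := by
          apply mul_le_mul_of_nonneg_left _ hC₀0
          exact mul_le_mul h2 h3 (abs_nonneg _) this
      _ = C₀ * (2 * R) * dist x y := by ring
  have hLv : ∀ x y : EuclideanSpace ℝ (Fin n),
      |C₂ * v x - C₂ * v y| ≤ C₂ * dist x y := by
    intro x y
    have := (lipschitz_infDist_pt Ωᶜ).dist_le_mul x y
    rw [Real.dist_eq, NNReal.coe_one, one_mul] at this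
    have h2 : C₂ * v x - C₂ * v y = C₂ * (infDist y Ωᶜ - infDist x Ωᶜ) := by
      simp only [hv_def]; ring
    rw [h2, abs_mul, abs_of_nonneg hC₂pos.le]
    refine mul_le_mul_of_nonneg_left ?_ hC₂pos.le
    rw [abs_sub_comm]
    exact this
  have hlip : ∀ (f : EuclideanSpace ℝ (Fin n) → ℝ) (Cf : ℝ),
      (∀ x ∈ closure Ω, ∀ y ∈ closure Ω, |f x - f y| ≤ Cf * dist x y) → Cf ≤ L →
      ∀ x ∈ closure Ω, ∀ y ∈ closure Ω,
        |max (f x - C₁) (C₂ * v x) - max (f y - C₁) (C₂ * v y)| ≤ L * dist x y := by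
    intro f Cf hf hCf x hx y hy
    have h1 := abs_max_sub_max_le_max (f x - C₁) (C₂ * v x) (f y - C₁) (C₂ * v y)
    have h2 : |f x - C₁ - (f y - C₁)| ≤ L * dist x y := by
      have : f x - C₁ - (f y - C₁) = f x - f y := by ring
      rw [this]
      exact (hf x hx y hy).trans (mul_le_mul_of_nonneg_right hCf dist_nonneg)
    have h3 : |C₂ * v x - C₂ * v y| ≤ L * dist x y := by
      refine (hLv x y).trans ?_
      apply mul_le_mul_of_nonneg_right _ dist_nonneg
      simp only [hL_def]
      have h0 : (0:ℝ) ≤ (Kφ:ℝ) := Kφ.2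
      have h1 : (0:ℝ) ≤ C₀ * (2 * R) := by positivity
      linarith
    exact h1.trans (max_le h2 h3)
  have hLg : ∀ x ∈ closure Ω, ∀ y ∈ closure Ω, |g x - g y| ≤ ((Kφ : ℝ) + C₀ * (2 * R)) * dist x y := by
    intro x hx y hy
    have h1 : g x - g y = (φ x - φ y) + (q x - q y) := by
      simp only [hg_def, hq_def]; ring
    rw [h1]
    calc |φ x - φ y + (q x - q y)| ≤ |φ x - φ y| + |q x - q y| := abs_add_le _ _
      _ ≤ (Kφ : ℝ) * dist x y + C₀ * (2 * R) * dist x y := add_le_add (hLφ x y) (hLq x hx y hy)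
      _ = ((Kφ : ℝ) + C₀ * (2 * R)) * dist x y := by ring
  have hφ₁lip : LipschitzOnWith L.toNNReal φ₁ (closure Ω) := by
    apply LipschitzOnWith.of_dist_le_mul
    intro x hx y hy
    rw [Real.dist_eq, Real.coe_toNNReal L hL0]
    exact hlip g ((Kφ : ℝ) + C₀ * (2 * R)) hLg (by simp only [hL_def]; linarith [hC₂pos.le]) x hx y hy
  have hφ₂lip : LipschitzOnWith L.toNNReal φ₂ (closure Ω) := by
    apply LipschitzOnWith.of_dist_le_mul
    intro x hx y hy
    rw [Real.dist_eq, Real.coe_toNNReal L hL0]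
    refine hlip q (C₀ * (2 * R)) (fun x hx y hy => hLq x hx y hy) ?_ x hx y hy
    simp only [hL_def]
    have : (0:ℝ) ≤ (Kφ : ℝ) := Kφ.2
    linarith [hC₂pos.le]
  -- boundary values
  have hbd : ∀ x ∈ frontier Ω, v x = 0 := by
    intro x hx
    have hx' := hx
    rw [frontier_eq_closure_inter_closure] at hx'
    simp only [hv_def, neg_eq_zero]
    exact infDist_zero_of_mem_closure hx'.2
  have hneg : ∀ f : EuclideanSpace ℝ (Fin n) → ℝ,
      (∀ x ∈ closure Ω, f x ≤ C₁') → ∀ x ∈ frontier Ω, max (f x - C₁) (C₂ * v x) = 0 := by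
    intro f hf x hx
    have hxc : x ∈ closure Ω := frontier_subset_closure hx
    rw [hbd x hx, mul_zero]
    apply max_eq_right
    have := hf x hxc
    linarith
  -- final assembly
  refine ⟨φ₁, φ₂, hφ₁conv, hφ₂conv, hφ₁lip.continuousOn, hφ₂lip.continuousOn,
    ⟨L.toNNReal, hφ₁lip⟩, ⟨L.toNNReal, hφ₂lip⟩, ?_, ?_, ?_⟩
  · apply hneg
    intro x hx
    have h := hbound x hx
    have := neg_abs_le (φ x)
    have := le_abs_self (φ x)
    simp only [hg_def]
    linarith
  · apply hneg
    intro x hx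
    have h := hbound x hx
    have := abs_nonneg (φ x)
    simp only [hq_def]
    linarith
  · intro x hx
    have hxc : x ∈ closure Ω := subset_closure hx
    by_cases hxs : x ∈ tsupport φ
    · have hvx : C₂ * v x ≤ -(2 * C₁) := by
        have h1 := hδ x hxs
        have : C₂ * v x ≤ C₂ * (-δ) := by
          apply mul_le_mul_of_nonneg_left _ hC₂pos.le
          simp only [hv_def]
          linarith
        rw [hC₂_def] at this ⊢
        calc 2 * C₁ / δ * v x ≤ 2 * C₁ / δ * (-δ) := this
          _ = -(2 * C₁) := by field_simp
      have hb := hbound x hxc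
      have habs1 := neg_abs_le (φ x)
      have habs2 := le_abs_self (φ x)
      have hq0 : 0 ≤ C₀ * ‖x‖ ^ 2 := by positivity
      have hg_lb : -(2 * C₁) < g x - C₁ := by
        simp only [hg_def]
        linarith
      have hq_lb : -(2 * C₁) < q x - C₁ := by
        simp only [hq_def]
        linarith
      have e1 : φ₁ x = g x - C₁ := max_eq_left (by linarith)
      have e2 : φ₂ x = q x - C₁ := max_eq_left (by linarith)
      rw [e1, e2]
      simp only [hg_def, hq_def]
      ring
    · have hφ0 : φ x = 0 := image_eq_zero_of_notMem_tsupport hxs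
      have hgq : g x = q x := by simp only [hg_def, hq_def, hφ0, zero_add]
      rw [hφ0]
      simp only [hφ₁_def, hφ₂_def, hgq, sub_self]
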